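/- Given a constant specification CS for JTO such that CS^O = ∅, the consistency principle fails in interpreted-neighborhood semantics: for every deontic term t ∈ Tm^O and every agent i, not ⊨^N_CS ¬O[t]_i ⊥. -/

import Mathlib

namespace JTO

/-- Epistemic justification terms. -/
inductive TmE (Const Var : Type) : Type
  | const : Const → TmE Const Var
  | var   : Var → TmE Const Var
  | bang  : TmE Const Var → TmE Const Var
  | plus  : TmE Const Var → TmE Const Var → TmE Const Var
  | times : TmE Const Var → TmE Const Var → TmE Const Var

/-- Deontic (normative) justification terms. -/
inductive TmO (Const Var : Type) : Type
  | const : Const → TmO Const Var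
  | var   : Var → TmO Const Var
  | ddag  : TmO Const Var → TmO Const Var
  | times : TmO Const Var → TmO Const Var → TmO Const Var

/-- Formulas of the logic JTO. -/
inductive Fm (Ag Const Var Atom : Type) : Type
  | atom  : Atom → Fm Ag Const Var Atom
  | bot   : Fm Ag Const Var Atom
  | imp   : Fm Ag Const Var Atom → Fm Ag Const Var Atom → Fm Ag Const Var Atom
  | next  : Fm Ag Const Var Atom → Fm Ag Const Var Atom
  | wprev : Fm Ag Const Var Atom → Fm Ag Const Var Atom
  | untl  : Fm Ag Const Var Atom → Fm Ag Const Var Atom → Fm Ag Const Var Atom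
  | snce  : Fm Ag Const Var Atom → Fm Ag Const Var Atom → Fm Ag Const Var Atom
  | jbox  : Ag → TmE Const Var → Fm Ag Const Var Atom → Fm Ag Const Var Atom
  | obox  : Ag → TmO Const Var → Fm Ag Const Var Atom → Fm Ag Const Var Atom

namespace Fm

variable {Ag Const Var Atom : Type}

/-- ¬φ := φ → ⊥ -/
def neg (φ : Fm Ag Const Var Atom) : Fm Ag Const Var Atom := φ.imp bot
/-- ⊤ := ¬⊥ -/
def top : Fm Ag Const Var Atom := neg bot
/-- φ ∨ ψ := ¬φ → ψ -/
def disj (φ ψ : Fm Ag Const Var Atom) : Fm Ag Const Var Atom := (neg φ).imp ψ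
/-- φ ∧ ψ := ¬(¬φ ∨ ¬ψ) -/
def conj (φ ψ : Fm Ag Const Var Atom) : Fm Ag Const Var Atom := neg (disj (neg φ) (neg ψ))
/-- φ ↔ ψ := (φ→ψ) ∧ (ψ→φ) -/
def biim (φ ψ : Fm Ag Const Var Atom) : Fm Ag Const Var Atom := conj (φ.imp ψ) (ψ.imp φ)
/-- strong previous ⊙ₛφ := ¬⊙_w¬φ -/
def sprev (φ : Fm Ag Const Var Atom) : Fm Ag Const Var Atom := neg (wprev (neg φ))
/-- eventually ◇φ := ⊤ U φ -/
def ev (φ : Fm Ag Const Var Atom) : Fm Ag Const Var Atom := untl top φ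
/-- always (henceforth) □φ := ¬◇¬φ -/
def alw (φ : Fm Ag Const Var Atom) : Fm Ag Const Var Atom := neg (ev (neg φ))
/-- once ◇⁻φ := ⊤ S φ -/
def once (φ : Fm Ag Const Var Atom) : Fm Ag Const Var Atom := snce top φ
/-- has-always-been □⁻φ := ¬◇⁻¬φ -/
def sofar (φ : Fm Ag Const Var Atom) : Fm Ag Const Var Atom := neg (once (neg φ))
/-- ⊡φ := □⁻φ ∧ □φ -/
def boxdot (φ : Fm Ag Const Var Atom) : Fm Ag Const Var Atom := conj (sofar φ) (alw φ)
/-- weak until (unless) φ W ψ := (φ U ψ) ∨ □φ -/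
def wuntl (φ ψ : Fm Ag Const Var Atom) : Fm Ag Const Var Atom := disj (untl φ ψ) (alw φ)
/-- permission P[s]ᵢφ := ¬O[s]ᵢ¬φ -/
def pbox (i : Ag) (t : TmO Const Var) (φ : Fm Ag Const Var Atom) : Fm Ag Const Var Atom :=
  neg (obox i t (neg φ))
/-- time = m, i.e. ⊙ₛ^m ⊙_w ⊥ -/
def timeEq : ℕ → Fm Ag Const Var Atom
  | 0 => wprev bot
  | m + 1 => sprev (timeEq m)
/-- true_m(φ) := ⊡(time=m → φ) -/
def trueAt (m : ℕ) (φ : Fm Ag Const Var Atom) : Fm Ag Const Var Atom :=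
  boxdot ((timeEq m).imp φ)

/-- Subformulas. -/
def subf : Fm Ag Const Var Atom → Set (Fm Ag Const Var Atom)
  | atom p => {atom p}
  | bot => {bot}
  | imp φ ψ => insert (imp φ ψ) (subf φ ∪ subf ψ)
  | next φ => insert (next φ) (subf φ)
  | wprev φ => insert (wprev φ) (subf φ)
  | untl φ ψ => insert (untl φ ψ) (subf φ ∪ subf ψ)
  | snce φ ψ => insert (snce φ ψ) (subf φ ∪ subf ψ)
  | jbox i t φ => insert (jbox i t φ) (subf φ)
  | obox i t φ => insert (obox i t φ) (subf φ)

/-- Subf⁺(χ) := A_χ ∪ {¬ψ : ψ ∈ A_χ}, with A_χ = Subf(χ) ∪ Subf(⊤ S ⊙_w⊥). -/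
def subfPlus (χ : Fm Ag Const Var Atom) : Set (Fm Ag Const Var Atom) :=
  (subf χ ∪ subf (snce top (wprev bot))) ∪ neg '' (subf χ ∪ subf (snce top (wprev bot)))

end Fm

variable {Ag Const Var Atom : Type}

/-- Propositional tautologies in the language of JTO. -/
def Taut (φ : Fm Ag Const Var Atom) : Prop :=
  ∀ v : Fm Ag Const Var Atom → Bool,
    v Fm.bot = false → (∀ a b, v (a.imp b) = (!(v a) || v b)) → v φ = true

/-- The axioms of JTO. -/
inductive IsAxiom : Fm Ag Const Var Atom → Prop
  | taut {φ : Fm Ag Const Var Atom} : Taut φ → IsAxiom φ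
  | nextK (φ ψ : Fm Ag Const Var Atom) :
      IsAxiom ((Fm.next (φ.imp ψ)).imp ((Fm.next φ).imp (Fm.next ψ)))
  | alwK (φ ψ : Fm Ag Const Var Atom) :
      IsAxiom ((Fm.alw (φ.imp ψ)).imp ((Fm.alw φ).imp (Fm.alw ψ)))
  | fn (φ : Fm Ag Const Var Atom) :
      IsAxiom (Fm.biim (Fm.next (Fm.neg φ)) (Fm.neg (Fm.next φ)))
  | ind (φ : Fm Ag Const Var Atom) :
      IsAxiom ((Fm.alw (φ.imp (Fm.next φ))).imp (φ.imp (Fm.alw φ)))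
  | untl1 (φ ψ : Fm Ag Const Var Atom) :
      IsAxiom ((Fm.untl φ ψ).imp (Fm.ev ψ))
  | untl2 (φ ψ : Fm Ag Const Var Atom) :
      IsAxiom (Fm.biim (Fm.untl φ ψ) (Fm.disj ψ (Fm.conj φ (Fm.next (Fm.untl φ ψ)))))
  | sofarK (φ ψ : Fm Ag Const Var Atom) :
      IsAxiom ((Fm.sofar (φ.imp ψ)).imp ((Fm.sofar φ).imp (Fm.sofar ψ)))
  | wprevK (φ ψ : Fm Ag Const Var Atom) :
      IsAxiom ((Fm.wprev (φ.imp ψ)).imp ((Fm.wprev φ).imp (Fm.wprev ψ)))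
  | sw (φ : Fm Ag Const Var Atom) : IsAxiom ((Fm.sprev φ).imp (Fm.wprev φ))
  | initial : IsAxiom (Fm.once (Fm.wprev (Fm.bot : Fm Ag Const Var Atom)))
  | sofarInd (φ : Fm Ag Const Var Atom) :
      IsAxiom ((Fm.sofar (φ.imp (Fm.wprev φ))).imp (φ.imp (Fm.sofar φ)))
  | snce1 (φ ψ : Fm Ag Const Var Atom) : IsAxiom ((Fm.snce φ ψ).imp (Fm.once ψ))
  | snce2 (φ ψ : Fm Ag Const Var Atom) :
      IsAxiom (Fm.biim (Fm.snce φ ψ) (Fm.disj ψ (Fm.conj φ (Fm.sprev (Fm.snce φ ψ)))))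
  | fp (φ : Fm Ag Const Var Atom) : IsAxiom (φ.imp (Fm.next (Fm.sprev φ)))
  | pf (φ : Fm Ag Const Var Atom) : IsAxiom (φ.imp (Fm.wprev (Fm.next φ)))
  | app (i : Ag) (t s : TmE Const Var) (φ ψ : Fm Ag Const Var Atom) :
      IsAxiom ((Fm.jbox i t (φ.imp ψ)).imp ((Fm.jbox i s φ).imp (Fm.jbox i (TmE.times t s) ψ)))
  | sum1 (i : Ag) (t s : TmE Const Var) (φ : Fm Ag Const Var Atom) :
      IsAxiom ((Fm.jbox i t φ).imp (Fm.jbox i (TmE.plus t s) φ))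
  | sum2 (i : Ag) (t s : TmE Const Var) (φ : Fm Ag Const Var Atom) :
      IsAxiom ((Fm.jbox i s φ).imp (Fm.jbox i (TmE.plus t s) φ))
  | fact (i : Ag) (t : TmE Const Var) (φ : Fm Ag Const Var Atom) :
      IsAxiom ((Fm.jbox i t φ).imp φ)
  | pos (i : Ag) (t : TmE Const Var) (φ : Fm Ag Const Var Atom) :
      IsAxiom ((Fm.jbox i t φ).imp (Fm.jbox i (TmE.bang t) (Fm.jbox i t φ)))
  | appO (i : Ag) (t s : TmO Const Var) (φ ψ : Fm Ag Const Var Atom) :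
      IsAxiom ((Fm.obox i t (φ.imp ψ)).imp ((Fm.obox i s φ).imp (Fm.obox i (TmO.times t s) ψ)))
  | noc (i : Ag) (t : TmO Const Var) (φ : Fm Ag Const Var Atom) :
      IsAxiom ((Fm.obox i t φ).imp (Fm.pbox i t φ))
  | ofact (i : Ag) (t : TmO Const Var) (φ : Fm Ag Const Var Atom) :
      IsAxiom (Fm.obox i (TmO.ddag t) ((Fm.obox i t φ).imp φ))

/-- Formulas of the shape [c_{j_n}]_{i_n} … [c_{j_1}]_{i_1} φ with φ an axiom instance, n ≥ 1. -/
inductive EIter : Fm Ag Const Var Atom → Prop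
  | base {i : Ag} {c : Const} {φ : Fm Ag Const Var Atom} :
      IsAxiom φ → EIter (Fm.jbox i (TmE.const c) φ)
  | step {i : Ag} {c : Const} {φ : Fm Ag Const Var Atom} :
      EIter φ → EIter (Fm.jbox i (TmE.const c) φ)

/-- Formulas of the shape O[c_{j_n}]_{i_n} … O[c_{j_1}]_{i_1} φ with φ an axiom instance, n ≥ 1. -/
inductive OIter : Fm Ag Const Var Atom → Prop
  | base {i : Ag} {c : Const} {φ : Fm Ag Const Var Atom} :
      IsAxiom φ → OIter (Fm.obox i (TmO.const c) φ)
  | step {i : Ag} {c : Const} {φ : Fm Ag Const Var Atom} :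
      OIter φ → OIter (Fm.obox i (TmO.const c) φ)

/-- A constant specification: a downward closed set of iterated constant-justification
assertions of axiom instances. -/
structure ConstSpec (Ag Const Var Atom : Type) where
  set : Set (Fm Ag Const Var Atom)
  shape : ∀ φ ∈ set, EIter φ ∨ OIter φ
  dcE : ∀ (i : Ag) (c : Const) (φ : Fm Ag Const Var Atom),
    Fm.jbox i (TmE.const c) φ ∈ set → EIter φ → φ ∈ set
  dcO : ∀ (i : Ag) (c : Const) (φ : Fm Ag Const Var Atom),
    Fm.obox i (TmO.const c) φ ∈ set → OIter φ → φ ∈ set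

/-- CS^E : the epistemic part of a constant specification. -/
def ConstSpec.csE (CS : ConstSpec Ag Const Var Atom) : Set (Fm Ag Const Var Atom) :=
  {φ ∈ CS.set | EIter φ}

/-- CS^O : the deontic part of a constant specification. -/
def ConstSpec.csO (CS : ConstSpec Ag Const Var Atom) : Set (Fm Ag Const Var Atom) :=
  {φ ∈ CS.set | OIter φ}

/-- Derivability in the Hilbert system JTO_CS. -/
inductive Deriv (CS : ConstSpec Ag Const Var Atom) : Fm Ag Const Var Atom → Prop
  | ax {φ : Fm Ag Const Var Atom} : IsAxiom φ → Deriv CS φ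
  | mp {φ ψ : Fm Ag Const Var Atom} : Deriv CS (φ.imp ψ) → Deriv CS φ → Deriv CS ψ
  | necNext {φ : Fm Ag Const Var Atom} : Deriv CS φ → Deriv CS (Fm.next φ)
  | necWPrev {φ : Fm Ag Const Var Atom} : Deriv CS φ → Deriv CS (Fm.wprev φ)
  | necAlw {φ : Fm Ag Const Var Atom} : Deriv CS φ → Deriv CS (Fm.alw φ)
  | necSofar {φ : Fm Ag Const Var Atom} : Deriv CS φ → Deriv CS (Fm.sofar φ)
  | csax {φ : Fm Ag Const Var Atom} : φ ∈ CS.set → Deriv CS φ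

/-- Conjunction of a list of formulas. -/
def conjList : List (Fm Ag Const Var Atom) → Fm Ag Const Var Atom
  | [] => Fm.top
  | φ :: l => Fm.conj φ (conjList l)

/-- T ⊢_CS φ iff ⊢_CS (ψ₁ ∧ … ∧ ψ_n) → φ for some ψ₁, …, ψ_n ∈ T. -/
def DerivFrom (CS : ConstSpec Ag Const Var Atom) (T : Set (Fm Ag Const Var Atom))
    (φ : Fm Ag Const Var Atom) : Prop :=
  ∃ L : List (Fm Ag Const Var Atom), (∀ ψ ∈ L, ψ ∈ T) ∧ Deriv CS ((conjList L).imp φ)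

/-- A set of formulas is consistent if it does not derive ⊥. -/
def Consistent (CS : ConstSpec Ag Const Var Atom) (T : Set (Fm Ag Const Var Atom)) : Prop :=
  ¬ DerivFrom CS T Fm.bot

end JTO
namespace JTO

variable {Ag Const Var Atom : Type}

/-- The data of an F-interpreted system (Fitting-style), without conditions. -/
structure FQuasi (Ag Const Var Atom S : Type) where
  R : Set (ℕ → S)
  K : Ag → S → S → Prop
  KO : Ag → S → S → Prop
  E : Ag → S → TmE Const Var → Set (Fm Ag Const Var Atom)
  EO : Ag → S → TmO Const Var → Set (Fm Ag Const Var Atom)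
  val : S → Set Atom

/-- Truth at a point (r, n) of an F-interpreted system. -/
def FQuasi.Sat {S : Type} (I : FQuasi Ag Const Var Atom S) :
    Fm Ag Const Var Atom → (ℕ → S) → ℕ → Prop
  | .atom p, r, n => p ∈ I.val (r n)
  | .bot, _, _ => False
  | .imp φ ψ, r, n => I.Sat φ r n → I.Sat ψ r n
  | .next φ, r, n => I.Sat φ r (n + 1)
  | .wprev φ, r, n => n = 0 ∨ I.Sat φ r (n - 1)
  | .untl φ ψ, r, n => ∃ m, n ≤ m ∧ I.Sat ψ r m ∧ ∀ k, n ≤ k → k < m → I.Sat φ r k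
  | .snce φ ψ, r, n => ∃ m, m ≤ n ∧ I.Sat ψ r m ∧ ∀ k, m < k → k ≤ n → I.Sat φ r k
  | .jbox i t φ, r, n =>
      φ ∈ I.E i (r n) t ∧ ∀ r' ∈ I.R, ∀ n' : ℕ, I.K i (r n) (r' n') → I.Sat φ r' n'
  | .obox i t φ, r, n =>
      φ ∈ I.EO i (r n) t ∧ ∀ r' ∈ I.R, ∀ n' : ℕ, I.KO i (r n) (r' n') → I.Sat φ r' n'

/-- An F-interpreted system for JTO_CS. -/
structure FIS (Ag Const Var Atom S : Type) (CS : ConstSpec Ag Const Var Atom)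
    extends FQuasi Ag Const Var Atom S where
  Sne : Nonempty S
  Rne : R.Nonempty
  Krefl : ∀ (i : Ag) (w : S), K i w w
  Ktrans : ∀ (i : Ag) (u v w : S), K i u v → K i v w → K i u w
  KOshift : ∀ (i : Ag) (w v : S), KO i w v → KO i v v
  Emono : ∀ (i : Ag) (v w : S) (t : TmE Const Var), K i v w → E i v t ⊆ E i w t
  Ecs : ∀ (i : Ag) (w : S) (t : TmE Const Var) (φ : Fm Ag Const Var Atom),
    Fm.jbox i t φ ∈ CS.csE → φ ∈ E i w t
  Eapp : ∀ (i : Ag) (w : S) (t s : TmE Const Var) (φ ψ : Fm Ag Const Var Atom),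
    φ.imp ψ ∈ E i w t → φ ∈ E i w s → ψ ∈ E i w (TmE.times t s)
  Epos : ∀ (i : Ag) (w : S) (t : TmE Const Var) (φ : Fm Ag Const Var Atom),
    φ ∈ E i w t → Fm.jbox i t φ ∈ E i w (TmE.bang t)
  EOcs : ∀ (i : Ag) (w : S) (t : TmO Const Var) (φ : Fm Ag Const Var Atom),
    Fm.obox i t φ ∈ CS.csO → φ ∈ EO i w t
  EOapp : ∀ (i : Ag) (w : S) (t s : TmO Const Var) (φ ψ : Fm Ag Const Var Atom),
    φ.imp ψ ∈ EO i w t → φ ∈ EO i w s → ψ ∈ EO i w (TmO.times t s)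
  EOcons : ∀ (i : Ag) (w : S) (t : TmO Const Var) (φ : Fm Ag Const Var Atom),
    φ ∈ EO i w t → Fm.neg φ ∉ EO i w t
  EOfact : ∀ (i : Ag) (w : S) (t : TmO Const Var) (φ : Fm Ag Const Var Atom),
    (Fm.obox i t φ).imp φ ∈ EO i w (TmO.ddag t)

/-- Truth at a point of an F-interpreted system. -/
abbrev FIS.Sat {S : Type} {CS : ConstSpec Ag Const Var Atom}
    (I : FIS Ag Const Var Atom S CS) :
    Fm Ag Const Var Atom → (ℕ → S) → ℕ → Prop :=
  I.toFQuasi.Sat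

/-- I ⊨ φ : truth at every point of the system. -/
def FIS.Valid {S : Type} {CS : ConstSpec Ag Const Var Atom}
    (I : FIS Ag Const Var Atom S CS) (φ : Fm Ag Const Var Atom) : Prop :=
  ∀ r ∈ I.R, ∀ n : ℕ, I.Sat φ r n

/-- ⊨_CS φ : validity in all F-interpreted systems for JTO_CS. -/
def FValid (CS : ConstSpec Ag Const Var Atom) (φ : Fm Ag Const Var Atom) : Prop :=
  ∀ (S : Type) (I : FIS Ag Const Var Atom S CS), I.Valid φ

/-- T ⊨_CS φ : the local consequence relation over F-interpreted systems. -/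
def FConseq (CS : ConstSpec Ag Const Var Atom) (T : Set (Fm Ag Const Var Atom))
    (φ : Fm Ag Const Var Atom) : Prop :=
  ∀ (S : Type) (I : FIS Ag Const Var Atom S CS), ∀ r ∈ I.R, ∀ n : ℕ,
    (∀ ψ ∈ T, I.Sat ψ r n) → I.Sat φ r n

/-- Maximal consistent sets of formulas. -/
def MCS (CS : ConstSpec Ag Const Var Atom) : Set (Set (Fm Ag Const Var Atom)) :=
  {Γ | Consistent CS Γ ∧ ∀ Δ, Γ ⊂ Δ → ¬ Consistent CS Δ}

/-- χ-maximal consistent subsets of Subf⁺(χ). -/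
def MCSx (CS : ConstSpec Ag Const Var Atom) (χ : Fm Ag Const Var Atom) :
    Set (Set (Fm Ag Const Var Atom)) :=
  {X | X ⊆ Fm.subfPlus χ ∧ Consistent CS X ∧
    ∀ Y, Y ⊆ Fm.subfPlus χ → X ⊂ Y → ¬ Consistent CS Y}

/-- The relation R_○ on MCS_χ (given by witnessing maximal consistent sets). -/
def Rnext (CS : ConstSpec Ag Const Var Atom) (χ : Fm Ag Const Var Atom)
    (X Y : Set (Fm Ag Const Var Atom)) : Prop :=
  ∃ Γ ∈ MCS CS, ∃ Δ ∈ MCS CS, X = Γ ∩ Fm.subfPlus χ ∧ Y = Δ ∩ Fm.subfPlus χ ∧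
    {φ | Fm.next φ ∈ Γ} ⊆ Δ

/-- Acceptable sequences of elements of MCS_χ. -/
def Acceptable (CS : ConstSpec Ag Const Var Atom) (χ : Fm Ag Const Var Atom)
    (X : ℕ → Set (Fm Ag Const Var Atom)) : Prop :=
  (∀ n, X n ∈ MCSx CS χ) ∧
  (∀ n, Rnext CS χ (X n) (X (n + 1))) ∧
  (∀ n (φ ψ : Fm Ag Const Var Atom), Fm.untl φ ψ ∈ X n →
    ∃ m, n ≤ m ∧ ψ ∈ X m ∧ ∀ k, n ≤ k → k < m → φ ∈ X k) ∧
  Fm.wprev Fm.bot ∈ X 0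

/-- The canonical epistemic accessibility relation. -/
def canK (CS : ConstSpec Ag Const Var Atom) (χ : Fm Ag Const Var Atom) (i : Ag)
    (X Y : Set (Fm Ag Const Var Atom)) : Prop :=
  ∀ Δ ∈ MCS CS, Y = Δ ∩ Fm.subfPlus χ →
    ∃ Γ ∈ MCS CS, X = Γ ∩ Fm.subfPlus χ ∧
      {φ | ∃ t : TmE Const Var, Fm.jbox i t φ ∈ Γ} ⊆ Δ

/-- The canonical evidence function. -/
def canE (CS : ConstSpec Ag Const Var Atom) (χ : Fm Ag Const Var Atom) (i : Ag)
    (X : Set (Fm Ag Const Var Atom)) (t : TmE Const Var) : Set (Fm Ag Const Var Atom) :=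
  {φ | ∀ Γ ∈ MCS CS, X = Γ ∩ Fm.subfPlus χ → Fm.jbox i t φ ∈ Γ}

/-- The canonical deontic accessibility relation. -/
def canKO (CS : ConstSpec Ag Const Var Atom) (χ : Fm Ag Const Var Atom) (i : Ag)
    (X Y : Set (Fm Ag Const Var Atom)) : Prop :=
  ∃ Γ ∈ MCS CS, ∃ Δ ∈ MCS CS, X = Γ ∩ Fm.subfPlus χ ∧ Y = Δ ∩ Fm.subfPlus χ ∧
    {φ | ∃ t : TmO Const Var, Fm.obox i t φ ∈ Γ} ⊆ Δ

/-- The canonical normative evidence function. -/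
def canEO (CS : ConstSpec Ag Const Var Atom) (χ : Fm Ag Const Var Atom) (i : Ag)
    (X : Set (Fm Ag Const Var Atom)) (t : TmO Const Var) : Set (Fm Ag Const Var Atom) :=
  {φ | ∀ Γ ∈ MCS CS, X = Γ ∩ Fm.subfPlus χ → Fm.obox i t φ ∈ Γ}

/-- The χ-canonical F-interpreted system (as structured data). -/
def canFQuasi (CS : ConstSpec Ag Const Var Atom) (χ : Fm Ag Const Var Atom) :
    FQuasi Ag Const Var Atom ↥(MCSx CS χ) where
  R := {r | Acceptable CS χ (fun n => ((r n : Set (Fm Ag Const Var Atom))))}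
  K := fun i X Y => canK CS χ i X.1 Y.1
  KO := fun i X Y => canKO CS χ i X.1 Y.1
  E := fun i X t => canE CS χ i X.1 t
  EO := fun i X t => canEO CS χ i X.1 t
  val := fun X => {p | Fm.atom p ∈ X.1}

end JTO
namespace JTO

variable {Ag Const Var Atom : Type}

/-- The data of a quasi-interpreted-neighborhood system. -/
structure NQuasi (Ag Const Var Atom S : Type) where
  R : Set (ℕ → S)
  N : Ag → S → TmE Const Var → Set (Set S)
  NO : Ag → S → TmO Const Var → Set (Set S)
  val : S → Set Atom
  valF : S → Set (Fm Ag Const Var Atom)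

/-- The image Im(R) of the system of runs. -/
def NQuasi.Im {S : Type} (I : NQuasi Ag Const Var Atom S) : Set S :=
  {w | ∃ r ∈ I.R, ∃ n : ℕ, r n = w}

/-- Truth at a point (r, n) of a quasi-interpreted-neighborhood system. -/
def NQuasi.SatP {S : Type} (I : NQuasi Ag Const Var Atom S) :
    Fm Ag Const Var Atom → (ℕ → S) → ℕ → Prop
  | .atom p, r, n => p ∈ I.val (r n)
  | .bot, _, _ => False
  | .imp φ ψ, r, n => I.SatP φ r n → I.SatP ψ r n
  | .next φ, r, n => I.SatP φ r (n + 1)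
  | .wprev φ, r, n => n = 0 ∨ I.SatP φ r (n - 1)
  | .untl φ ψ, r, n => ∃ m, n ≤ m ∧ I.SatP ψ r m ∧ ∀ k, n ≤ k → k < m → I.SatP φ r k
  | .snce φ ψ, r, n => ∃ m, m ≤ n ∧ I.SatP ψ r m ∧ ∀ k, m < k → k ≤ n → I.SatP φ r k
  | .jbox i t φ, r, n =>
      {w | (∃ r' ∈ I.R, ∃ n' : ℕ, r' n' = w ∧ I.SatP φ r' n') ∨
            (w ∉ I.Im ∧ φ ∈ I.valF w)} ∈ I.N i (r n) t
  | .obox i t φ, r, n =>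
      {w | (∃ r' ∈ I.R, ∃ n' : ℕ, r' n' = w ∧ I.SatP φ r' n') ∨
            (w ∉ I.Im ∧ φ ∈ I.valF w)} ∈ I.NO i (r n) t

/-- Truth at a state of a quasi-interpreted-neighborhood system. -/
def NQuasi.SatS {S : Type} (I : NQuasi Ag Const Var Atom S)
    (φ : Fm Ag Const Var Atom) (w : S) : Prop :=
  (∃ r ∈ I.R, ∃ n : ℕ, r n = w ∧ I.SatP φ r n) ∨ (w ∉ I.Im ∧ φ ∈ I.valF w)

/-- The truth set ⟦φ⟧ of a formula. -/
def NQuasi.tset {S : Type} (I : NQuasi Ag Const Var Atom S)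
    (φ : Fm Ag Const Var Atom) : Set S :=
  {w | I.SatS φ w}

/-- An interpreted-neighborhood system for JTO_CS. -/
structure NIS (Ag Const Var Atom S : Type) (CS : ConstSpec Ag Const Var Atom)
    extends NQuasi Ag Const Var Atom S where
  Sne : Nonempty S
  Rne : R.Nonempty
  Ncs : ∀ (i : Ag) (t : TmE Const Var) (φ : Fm Ag Const Var Atom),
    Fm.jbox i t φ ∈ CS.csE → ∀ w ∈ toNQuasi.Im, toNQuasi.tset φ ∈ N i w t
  Napp : ∀ (i : Ag), ∀ w ∈ toNQuasi.Im, ∀ (t s : TmE Const Var) (φ ψ : Fm Ag Const Var Atom),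
    toNQuasi.tset (φ.imp ψ) ∈ N i w t → toNQuasi.tset φ ∈ N i w s →
      toNQuasi.tset ψ ∈ N i w (TmE.times t s)
  Nsum : ∀ (i : Ag), ∀ w ∈ toNQuasi.Im, ∀ (t s : TmE Const Var) (φ : Fm Ag Const Var Atom),
    toNQuasi.tset φ ∈ N i w s →
      toNQuasi.tset φ ∈ N i w (TmE.plus t s) ∧ toNQuasi.tset φ ∈ N i w (TmE.plus s t)
  Nrefl : ∀ (i : Ag), ∀ w ∈ toNQuasi.Im, ∀ (t : TmE Const Var) (φ : Fm Ag Const Var Atom),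
    toNQuasi.tset φ ∈ N i w t → w ∈ toNQuasi.tset φ
  Npos : ∀ (i : Ag), ∀ w ∈ toNQuasi.Im, ∀ (t : TmE Const Var) (φ : Fm Ag Const Var Atom),
    toNQuasi.tset φ ∈ N i w t → toNQuasi.tset (Fm.jbox i t φ) ∈ N i w (TmE.bang t)
  NOcs : ∀ (i : Ag) (t : TmO Const Var) (φ : Fm Ag Const Var Atom),
    Fm.obox i t φ ∈ CS.csO → ∀ w ∈ toNQuasi.Im, toNQuasi.tset φ ∈ NO i w t
  NOapp : ∀ (i : Ag), ∀ w ∈ toNQuasi.Im, ∀ (t s : TmO Const Var) (φ ψ : Fm Ag Const Var Atom),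
    toNQuasi.tset (φ.imp ψ) ∈ NO i w t → toNQuasi.tset φ ∈ NO i w s →
      toNQuasi.tset ψ ∈ NO i w (TmO.times t s)
  NOnoc : ∀ (i : Ag), ∀ w ∈ toNQuasi.Im, ∀ (t : TmO Const Var) (φ : Fm Ag Const Var Atom),
    toNQuasi.tset φ ∈ NO i w t → toNQuasi.tset (Fm.neg φ) ∉ NO i w t
  NOfact : ∀ (i : Ag), ∀ w ∈ toNQuasi.Im, ∀ (t : TmO Const Var) (φ : Fm Ag Const Var Atom),
    toNQuasi.tset ((Fm.obox i t φ).imp φ) ∈ NO i w (TmO.ddag t)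

/-- Truth at a point of an interpreted-neighborhood system. -/
abbrev NIS.SatP {S : Type} {CS : ConstSpec Ag Const Var Atom}
    (I : NIS Ag Const Var Atom S CS) :
    Fm Ag Const Var Atom → (ℕ → S) → ℕ → Prop :=
  I.toNQuasi.SatP

/-- I ⊨ φ for an interpreted-neighborhood system. -/
def NIS.Valid {S : Type} {CS : ConstSpec Ag Const Var Atom}
    (I : NIS Ag Const Var Atom S CS) (φ : Fm Ag Const Var Atom) : Prop :=
  ∀ r ∈ I.R, ∀ n : ℕ, I.SatP φ r n

/-- ⊨^N_CS φ : validity in all interpreted-neighborhood systems for JTO_CS. -/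
def NValid (CS : ConstSpec Ag Const Var Atom) (φ : Fm Ag Const Var Atom) : Prop :=
  ∀ (S : Type) (I : NIS Ag Const Var Atom S CS), I.Valid φ

/-- T ⊨^N_CS φ : local consequence over interpreted-neighborhood systems. -/
def NConseq (CS : ConstSpec Ag Const Var Atom) (T : Set (Fm Ag Const Var Atom))
    (φ : Fm Ag Const Var Atom) : Prop :=
  ∀ (S : Type) (I : NIS Ag Const Var Atom S CS), ∀ r ∈ I.R, ∀ n : ℕ,
    (∀ ψ ∈ T, I.SatP ψ r n) → I.SatP φ r n

end JTO

namespace JTO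

/-
Take a single run through states `inl n`, plus one state `inr ψ` outside the run for every
formula `ψ`, at which exactly `ψ` holds. Then a truth set `⟦φ⟧` determines `φ`, so
neighborhoods may be chosen syntactically: `N_i(w, t)` consists of the sets containing `w`,
which makes `[t]_i φ` equivalent to `φ`, and `N^O_i(w, s)` consists of the `⟦χ⟧` with
`χ = ⊥` or `χ` an instance `O[s']_i θ → θ` of obligated factivity with `s = ‡s'`.
No formula `O[s']_j θ` is among these `χ`, which makes application vacuous and rules out
conflicts, yet `O[t]_i ⊥` holds everywhere. With `CS^O = ∅` the only remaining requirement
is the one coming from `CS^E`, namely that the axioms hold along the run.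
-/

variable {Ag Const Var Atom : Type}

namespace NQuasi

variable {S : Type} (I : NQuasi Ag Const Var Atom S) (r : ℕ → S) (n : ℕ)

theorem satP_imp (φ ψ : Fm Ag Const Var Atom) :
    I.SatP (φ.imp ψ) r n ↔ (I.SatP φ r n → I.SatP ψ r n) := Iff.rfl

theorem satP_neg (φ : Fm Ag Const Var Atom) : I.SatP φ.neg r n ↔ ¬ I.SatP φ r n := Iff.rfl

theorem satP_top : I.SatP (Fm.top : Fm Ag Const Var Atom) r n := id

theorem satP_disj (φ ψ : Fm Ag Const Var Atom) :
    I.SatP (φ.disj ψ) r n ↔ I.SatP φ r n ∨ I.SatP ψ r n :=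
  or_iff_not_imp_left.symm

theorem satP_conj (φ ψ : Fm Ag Const Var Atom) :
    I.SatP (φ.conj ψ) r n ↔ I.SatP φ r n ∧ I.SatP ψ r n := by
  simp only [Fm.conj, satP_neg, satP_disj]
  tauto

theorem satP_biim (φ ψ : Fm Ag Const Var Atom) :
    I.SatP (φ.biim ψ) r n ↔ (I.SatP φ r n ↔ I.SatP ψ r n) := by
  simp only [Fm.biim, satP_conj, SatP]
  tauto

theorem satP_sprev (φ : Fm Ag Const Var Atom) :
    I.SatP φ.sprev r n ↔ n ≠ 0 ∧ I.SatP φ r (n - 1) := by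
  simp only [Fm.sprev, satP_neg, SatP]
  tauto

theorem satP_ev (φ : Fm Ag Const Var Atom) :
    I.SatP φ.ev r n ↔ ∃ m, n ≤ m ∧ I.SatP φ r m := by
  simp only [Fm.ev, SatP]
  exact exists_congr fun m => and_congr_right fun _ =>
    and_iff_left fun _ _ _ => satP_top I r _

theorem satP_once (φ : Fm Ag Const Var Atom) :
    I.SatP φ.once r n ↔ ∃ m ≤ n, I.SatP φ r m := by
  simp only [Fm.once, SatP]
  exact exists_congr fun m => and_congr_right fun _ =>
    and_iff_left fun _ _ _ => satP_top I r _

theorem satP_alw (φ : Fm Ag Const Var Atom) :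
    I.SatP φ.alw r n ↔ ∀ m, n ≤ m → I.SatP φ r m := by
  simp only [Fm.alw, satP_neg, satP_ev]
  push Not
  rfl

theorem satP_sofar (φ : Fm Ag Const Var Atom) :
    I.SatP φ.sofar r n ↔ ∀ m ≤ n, I.SatP φ r m := by
  simp only [Fm.sofar, satP_neg, satP_once]
  push Not
  rfl

theorem satP_of_taut {φ : Fm Ag Const Var Atom} (h : Taut φ) : I.SatP φ r n := by
  classical
  simpa using h (fun ψ => decide (I.SatP ψ r n)) (decide_eq_false id)
    (fun a b => by by_cases I.SatP a r n <;> simp [SatP, *])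

theorem satP_alw_induction (φ : Fm Ag Const Var Atom) :
    I.SatP ((φ.imp φ.next).alw.imp (φ.imp φ.alw)) r n := by
  intro hstep hφ
  rw [satP_alw] at hstep ⊢
  exact fun m hm => Nat.le_induction hφ (fun k hk ih => hstep k hk ih) m hm

theorem satP_sofar_induction (φ : Fm Ag Const Var Atom) :
    I.SatP ((φ.imp φ.wprev).sofar.imp (φ.imp φ.sofar)) r n := by
  intro hstep hφ
  rw [satP_sofar] at hstep ⊢
  intro m hm
  induction hm using Nat.decreasingInduction with
  | self => exact hφ
  | of_succ k hk ih => exact (hstep (k + 1) hk ih).resolve_left k.succ_ne_zero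

theorem satP_untl_unfold (φ ψ : Fm Ag Const Var Atom) :
    I.SatP ((φ.untl ψ).biim (ψ.disj (φ.conj (φ.untl ψ).next))) r n := by
  rw [satP_biim, satP_disj, satP_conj]
  constructor
  · rintro ⟨m, hnm, hψ, hφ⟩
    rcases hnm.eq_or_lt with rfl | hlt
    · exact Or.inl hψ
    · exact Or.inr ⟨hφ n le_rfl hlt, m, hlt, hψ, fun k hk hkm => hφ k (by omega) hkm⟩
  · rintro (hψ | ⟨hφn, m, hm, hψ, hφ⟩)
    · exact ⟨n, le_rfl, hψ, fun k hk hkn => absurd hkn (not_lt.2 hk)⟩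
    · refine ⟨m, by omega, hψ, fun k hk hkm => ?_⟩
      rcases hk.eq_or_lt with rfl | hlt
      · exact hφn
      · exact hφ k hlt hkm

theorem satP_snce_unfold (φ ψ : Fm Ag Const Var Atom) :
    I.SatP ((φ.snce ψ).biim (ψ.disj (φ.conj (φ.snce ψ).sprev))) r n := by
  rw [satP_biim, satP_disj, satP_conj, satP_sprev]
  constructor
  · rintro ⟨m, hmn, hψ, hφ⟩
    rcases hmn.eq_or_lt with rfl | hlt
    · exact Or.inl hψ
    · exact Or.inr ⟨hφ n hlt le_rfl, by omega, m, by omega, hψ,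
        fun k hk hkn => hφ k hk (by omega)⟩
  · rintro (hψ | ⟨hφn, hn, m, hm, hψ, hφ⟩)
    · exact ⟨n, le_rfl, hψ, fun k hk hkn => absurd hkn (not_le.2 hk)⟩
    · refine ⟨m, by omega, hψ, fun k hk hkn => ?_⟩
      rcases hkn.eq_or_lt with rfl | hlt
      · exact hφn
      · exact hφ k hk (by omega)

theorem satP_of_isAxiom (E : Ag → TmO Const Var → Set (Fm Ag Const Var Atom))
    (hjbox : ∀ i t φ m, I.SatP (.jbox i t φ) r m ↔ I.SatP φ r m)
    (hobox : ∀ i s φ m, I.SatP (.obox i s φ) r m ↔ φ ∈ E i s)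
    (happ : ∀ i t s φ ψ, φ.imp ψ ∈ E i t → φ ∈ E i s → ψ ∈ E i (.times t s))
    (hcons : ∀ i t φ, φ ∈ E i t → φ.neg ∉ E i t)
    (hfact : ∀ i t φ, (Fm.obox i t φ).imp φ ∈ E i (.ddag t))
    {φ : Fm Ag Const Var Atom} (h : IsAxiom φ) : I.SatP φ r n := by
  induction h with
  | taut h => exact I.satP_of_taut r n h
  | nextK => exact fun h₁ h₂ => h₁ h₂
  | alwK =>
    simp only [satP_imp, satP_alw]
    exact fun h₁ h₂ m hm => h₁ m hm (h₂ m hm)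
  | fn => exact (I.satP_biim r n _ _).2 Iff.rfl
  | ind φ => exact I.satP_alw_induction r n φ
  | untl1 => exact fun ⟨m, hm, hψ, _⟩ => (I.satP_ev r n _).2 ⟨m, hm, hψ⟩
  | untl2 φ ψ => exact I.satP_untl_unfold r n φ ψ
  | sofarK =>
    simp only [satP_imp, satP_sofar]
    exact fun h₁ h₂ m hm => h₁ m hm (h₂ m hm)
  | wprevK => exact fun h₁ h₂ => h₁.elim Or.inl fun h₁ => h₂.imp id h₁
  | sw => exact fun h => Or.inr ((I.satP_sprev r n _).1 h).2
  | initial => exact (I.satP_once r n _).2 ⟨0, n.zero_le, Or.inl rfl⟩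
  | sofarInd φ => exact I.satP_sofar_induction r n φ
  | snce1 => exact fun ⟨m, hm, hψ, _⟩ => (I.satP_once r n _).2 ⟨m, hm, hψ⟩
  | snce2 φ ψ => exact I.satP_snce_unfold r n φ ψ
  | fp => exact fun h => (I.satP_sprev r (n + 1) _).2 ⟨n.succ_ne_zero, h⟩
  | pf =>
    exact fun h => n.eq_zero_or_pos.imp id fun hn => by rwa [SatP, Nat.sub_add_cancel hn]
  | app | sum1 | sum2 | fact | pos => simp [satP_imp, hjbox]
  | appO i t s φ ψ =>
    simp only [satP_imp, hobox]
    exact happ i t s φ ψ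
  | noc i t φ =>
    simp only [satP_imp, Fm.pbox, satP_neg, hobox]
    exact hcons i t φ
  | ofact i t φ => exact (hobox _ _ _ _).2 (hfact i t φ)

end NQuasi

def obligations (i : Ag) (s : TmO Const Var) : Set (Fm Ag Const Var Atom) :=
  {χ | χ = .bot ∨ ∃ s' θ, s = .ddag s' ∧ χ = (Fm.obox i s' θ).imp θ}

theorem bot_mem_obligations (i : Ag) (s : TmO Const Var) :
    (.bot : Fm Ag Const Var Atom) ∈ obligations i s :=
  Or.inl rfl

theorem obox_imp_self_mem_obligations (i : Ag) (t : TmO Const Var) (φ : Fm Ag Const Var Atom) :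
    (Fm.obox i t φ).imp φ ∈ obligations i (.ddag t) :=
  Or.inr ⟨t, φ, rfl, rfl⟩

theorem notMem_obligations_of_imp_mem {i j : Ag} {s t : TmO Const Var}
    {φ ψ : Fm Ag Const Var Atom} (h : φ.imp ψ ∈ obligations i t) :
    φ ∉ obligations j s := by
  obtain h | ⟨s', θ, -, h⟩ := h
  · cases h
  · cases h
    intro hφ
    obtain hφ | ⟨_, _, _, hφ⟩ := hφ <;> cases hφ

variable (Ag Const Var Atom) in
def counterModel : NQuasi Ag Const Var Atom (ℕ ⊕ Fm Ag Const Var Atom) where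
  R := {Sum.inl}
  N _ w _ := {A | w ∈ A}
  NO i _ s := {A | ∃ χ ∈ obligations i s, Sum.inr ⁻¹' A = {χ}}
  val _ := ∅
  valF := Sum.elim (fun _ => ∅) fun ψ => {ψ}

theorem im_counterModel : (counterModel Ag Const Var Atom).Im = Set.range Sum.inl := by
  ext w
  simp [NQuasi.Im, counterModel]

theorem preimage_inr_tset_counterModel (φ : Fm Ag Const Var Atom) :
    Sum.inr ⁻¹' (counterModel Ag Const Var Atom).tset φ = {φ} := by
  ext ψ
  simp only [Set.mem_preimage, NQuasi.tset, Set.mem_ofPred_eq, NQuasi.SatS, im_counterModel]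
  simp [counterModel, eq_comm]

theorem inl_mem_tset_counterModel (φ : Fm Ag Const Var Atom) (n : ℕ) :
    Sum.inl n ∈ (counterModel Ag Const Var Atom).tset φ ↔
      (counterModel Ag Const Var Atom).SatP φ Sum.inl n := by
  simp [NQuasi.tset, NQuasi.SatS, counterModel]

theorem tset_mem_NO_counterModel_iff (i : Ag) (w : ℕ ⊕ Fm Ag Const Var Atom)
    (s : TmO Const Var) (φ : Fm Ag Const Var Atom) :
    (counterModel Ag Const Var Atom).tset φ ∈ (counterModel Ag Const Var Atom).NO i w s ↔
      φ ∈ obligations i s := by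
  show (∃ χ ∈ obligations i s, Sum.inr ⁻¹' (counterModel ..).tset φ = {χ}) ↔ _
  simp [preimage_inr_tset_counterModel]

theorem counterModel_satP_jbox (i : Ag) (t : TmE Const Var) (φ : Fm Ag Const Var Atom) (n : ℕ) :
    (counterModel Ag Const Var Atom).SatP (.jbox i t φ) Sum.inl n ↔
      (counterModel Ag Const Var Atom).SatP φ Sum.inl n :=
  inl_mem_tset_counterModel φ n

theorem counterModel_satP_obox (i : Ag) (s : TmO Const Var) (φ : Fm Ag Const Var Atom) (n : ℕ) :
    (counterModel Ag Const Var Atom).SatP (.obox i s φ) Sum.inl n ↔ φ ∈ obligations i s :=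
  tset_mem_NO_counterModel_iff i (Sum.inl n) s φ

theorem counterModel_satP_of_eIter {φ : Fm Ag Const Var Atom} (h : EIter φ) (n : ℕ) :
    (counterModel Ag Const Var Atom).SatP φ Sum.inl n := by
  induction h with
  | base h =>
    refine (counterModel_satP_jbox ..).2 <| (counterModel Ag Const Var Atom).satP_of_isAxiom
      Sum.inl n obligations counterModel_satP_jbox counterModel_satP_obox
      (fun _ _ _ _ _ h₁ h₂ => absurd h₂ (notMem_obligations_of_imp_mem h₁))
      (fun _ _ _ h₁ h₂ => notMem_obligations_of_imp_mem h₂ h₁) obox_imp_self_mem_obligations h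
  | step _ ih => exact (counterModel_satP_jbox ..).2 ih

def counterNIS (CS : ConstSpec Ag Const Var Atom) (hCS : CS.csO = ∅) :
    NIS Ag Const Var Atom (ℕ ⊕ Fm Ag Const Var Atom) CS where
  toNQuasi := counterModel Ag Const Var Atom
  Sne := ⟨Sum.inl 0⟩
  Rne := ⟨Sum.inl, rfl⟩
  Ncs := by
    rintro i t φ ⟨-, hE⟩ w hw
    obtain ⟨n, rfl⟩ : w ∈ Set.range Sum.inl := im_counterModel ▸ hw
    exact (inl_mem_tset_counterModel ..).2
      ((counterModel_satP_jbox ..).1 (counterModel_satP_of_eIter hE n))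
  Napp := by
    intro i w hw t s φ ψ h₁ h₂
    obtain ⟨n, rfl⟩ : w ∈ Set.range Sum.inl := im_counterModel ▸ hw
    exact (inl_mem_tset_counterModel ψ n).2
      ((inl_mem_tset_counterModel _ n).1 h₁ ((inl_mem_tset_counterModel φ n).1 h₂))
  Nsum _ _ _ _ _ _ h := ⟨h, h⟩
  Nrefl _ _ _ _ _ h := h
  Npos := by
    intro i w hw t φ h
    obtain ⟨n, rfl⟩ : w ∈ Set.range Sum.inl := im_counterModel ▸ hw
    exact (inl_mem_tset_counterModel ..).2
      ((counterModel_satP_jbox ..).2 ((inl_mem_tset_counterModel ..).1 h))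
  NOcs _ _ _ h := by simp [hCS] at h
  NOapp := by
    intro i w _ t s φ ψ h₁ h₂
    rw [tset_mem_NO_counterModel_iff] at h₁ h₂
    exact absurd h₂ (notMem_obligations_of_imp_mem h₁)
  NOnoc := by
    intro i w _ t φ h₁ h₂
    rw [tset_mem_NO_counterModel_iff] at h₁ h₂
    exact notMem_obligations_of_imp_mem h₂ h₁
  NOfact i w _ t φ := (tset_mem_NO_counterModel_iff ..).2 (obox_imp_self_mem_obligations i t φ)

theorem consistency_principle_fails_general (Ag Const Var Atom : Type)
    (CS : ConstSpec Ag Const Var Atom) (hCS : CS.csO = ∅)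
    (t : TmO Const Var) (i : Ag) :
    ¬ NValid CS (Fm.neg (Fm.obox i t Fm.bot)) := fun hvalid =>
  hvalid _ (counterNIS CS hCS) Sum.inl rfl 0
    ((counterModel_satP_obox ..).2 (bot_mem_obligations i t))

/-- if CS^O = ∅, the consistency principle ¬O[t]ᵢ⊥ is not valid
over interpreted-neighborhood systems. -/
theorem consistency_principle_fails (Ag Const Var Atom : Type)
    [Fintype Ag] [Nonempty Ag] [Countable Const] [Countable Var] [Countable Atom]
    (CS : ConstSpec Ag Const Var Atom) (hCS : CS.csO = ∅)
    (t : TmO Const Var) (i : Ag) :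
    ¬ NValid CS (Fm.neg (Fm.obox i t Fm.bot)) :=
  consistency_principle_fails_general Ag Const Var Atom CS hCS t i

end JTO
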